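/- arXiv:1609.05675 — 5 statements merged into one kernel-verified Lean document; each statement's English description precedes it below -/
import Mathlib

section
/- If a, b, c, d, n are integers with d > 0, b > 0 and a/b ≤ c/d (as rationals), then a + ⌈c(n-b)/d⌉ ≤ ⌈cn/d⌉. -/
theorem Int.add_ceil_le_ceil_of_add_le {R : Type*} [Ring R] [LinearOrder R] [IsOrderedRing R]
    [FloorRing R] {a : ℤ} {x y : R} (h : x + a ≤ y) : a + ⌈x⌉ ≤ ⌈y⌉ := by
  rw [add_comm, ← Int.ceil_add_intCast]
  exact Int.ceil_le_ceil h

theorem ceil_frac_bound_general (a b c d n : ℤ) (hb : 0 < b)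
    (h : (a : ℚ) / (b : ℚ) ≤ (c : ℚ) / (d : ℚ)) :
    a + ⌈((c : ℚ) * ((n : ℚ) - (b : ℚ))) / (d : ℚ)⌉ ≤ ⌈((c : ℚ) * (n : ℚ)) / (d : ℚ)⌉ := by
  have ha : (a : ℚ) ≤ c * b / d := by
    rw [mul_div_right_comm]
    exact (div_le_iff₀ (by exact_mod_cast hb)).1 h
  apply Int.add_ceil_le_ceil_of_add_le
  calc (c : ℚ) * (n - b) / d + a ≤ c * (n - b) / d + c * b / d := by gcongr
    _ = c * n / d := by ring

theorem ceil_frac_bound (a b c d n : ℤ) (hd : 0 < d) (hb : 0 < b)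
    (h : (a : ℚ) / (b : ℚ) ≤ (c : ℚ) / (d : ℚ)) :
    a + ⌈((c : ℚ) * ((n : ℚ) - (b : ℚ))) / (d : ℚ)⌉ ≤ ⌈((c : ℚ) * (n : ℚ)) / (d : ℚ)⌉ :=
  ceil_frac_bound_general a b c d n hb h
end

section
/- Let T be a finite tree of order at least 3 and let T* be the twin-free tree associated to T, obtained by deleting all but one leaf from every maximal set of pairwise twin leaves. Then for every integer k ≥ 1, γ_{B_k}(T) = γ_{B_k}(T*). -/
/-- `f` is a dominating `k`-broadcast on `G`: each value is at most `k`, and every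
vertex `u` is `f`-dominated by some vertex `v` with `f v ≥ 1` and `d(u,v) ≤ f v`. -/
def IsDomKBroadcast {V : Type*} (G : SimpleGraph V) (k : ℕ) (f : V → ℕ) : Prop :=
  (∀ v, f v ≤ k) ∧ ∀ u, ∃ v, 1 ≤ f v ∧ G.Reachable u v ∧ G.dist u v ≤ f v

/-- The dominating `k`-broadcast number: minimum cost of a dominating `k`-broadcast. -/
noncomputable def gammaBk {V : Type*} (G : SimpleGraph V) (k : ℕ) : ℕ :=
  sInf {c : ℕ | ∃ f : V → ℕ, IsDomKBroadcast G k f ∧ ∑ᶠ v, f v = c}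

/-- The radius of a graph: the minimum eccentricity of a vertex. -/
noncomputable def grad {V : Type*} (G : SimpleGraph V) : ℕ :=
  sInf {e : ℕ | ∃ v : V, ∀ u : V, G.dist v u ≤ e}

/-- A leaf is a vertex of degree one, i.e. with a unique neighbor. -/
def IsLeaf {V : Type*} (G : SimpleGraph V) (u : V) : Prop := ∃! w, G.Adj u w

/-! Broadcasts can be carried between `T` and `T*` without raising their cost. Moving the
broadcast of every leaf onto its support vertex (capped at `k`) keeps domination, since the support
vertex is one step closer to everything but the leaf itself. Afterwards only non-leaves broadcast,
all of them lie in `T*`, and a deleted leaf is dominated as soon as its surviving twin is, the two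
being equidistant from every non-leaf. Distances in `T*` are those of `T` because no interior
vertex of a path is a leaf. -/

open SimpleGraph Finset

section

variable {V : Type*} {G : SimpleGraph V}

lemma IsLeaf.dist_eq_dist_add_one (hG : G.Connected) {u v w : V} (hu : IsLeaf G u)
    (huv : G.Adj u v) (hw : w ≠ u) : G.dist u w = G.dist v w + 1 := by
  have hle : G.dist u w ≤ G.dist v w + 1 := by
    have := hG.dist_triangle (u := u) (v := v) (w := w)
    rw [dist_eq_one_iff_adj.mpr huv] at this
    omega
  obtain ⟨p, hp⟩ := hG.exists_walk_length_eq_dist u w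
  cases p with
  | nil => exact absurd rfl hw
  | @cons _ b _ hub q =>
    obtain rfl : b = v := hu.unique hub huv
    have := dist_le q
    rw [Walk.length_cons] at hp
    omega

lemma IsLeaf.not_isLeaf_of_adj [Fintype V] (hG : G.Connected) (hcard : 3 ≤ Fintype.card V)
    {u v : V} (hu : IsLeaf G u) (huv : G.Adj u v) : ¬ IsLeaf G v := by
  classical
  intro hv
  obtain ⟨x, -, hx⟩ := exists_mem_notMem_of_card_lt_card (s := {u, v}) (t := univ)
    (card_le_two.trans_lt (by rwa [card_univ]))
  simp only [mem_insert, mem_singleton, not_or] at hx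
  -- `x` would be farther from `u` than from `v`, and farther from `v` than from `u`
  have h₁ := hu.dist_eq_dist_add_one hG huv hx.1
  have h₂ := hv.dist_eq_dist_add_one hG huv.symm hx.2
  omega

lemma SimpleGraph.Walk.IsPath.not_isLeaf_of_mem_support {a b c : V} {p : G.Walk a b}
    (hp : p.IsPath) (hc : c ∈ p.support) (hca : c ≠ a) (hcb : c ≠ b) : ¬ IsLeaf G c := by
  intro hleaf
  obtain ⟨q, r, rfl⟩ := Walk.mem_support_iff_exists_append.mp hc
  have hq : ¬ q.Nil := Walk.not_nil_of_ne hca.symm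
  have hr : ¬ r.Nil := Walk.not_nil_of_ne hcb
  have hnd := hp.support_nodup
  rw [Walk.support_append, List.nodup_append] at hnd
  exact hnd.2.2 _ (List.mem_of_mem_dropLast (Walk.penultimate_mem_dropLast_support hq)) _
    (Walk.snd_mem_tail_support hr) (hleaf.unique (Walk.adj_penultimate hq).symm (Walk.adj_snd hr))

lemma exists_induce_walk_length_eq_dist (hG : G.Connected) {S : Set V}
    (hS : ∀ u, ¬ IsLeaf G u → u ∈ S) (a b : S) :
    ∃ q : (G.induce S).Walk a b, q.length = G.dist a b := by
  obtain ⟨p, hp, hlen⟩ := hG.exists_path_of_dist a b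
  have hpS : ∀ c ∈ p.support, c ∈ S := fun c hc => by
    by_cases hca : c = a
    · exact hca ▸ a.2
    by_cases hcb : c = b
    · exact hcb ▸ b.2
    exact hS c (hp.not_isLeaf_of_mem_support hc hca hcb)
  have hlen' := congrArg Walk.length (p.map_induce hpS)
  rw [Walk.length_map] at hlen'
  exact ⟨p.induce S hpS, hlen'.trans hlen⟩

lemma induce_dist_eq (hG : G.Connected) {S : Set V} (hS : ∀ u, ¬ IsLeaf G u → u ∈ S)
    (a b : S) : (G.induce S).dist a b = G.dist a b := by
  obtain ⟨q, hq⟩ := exists_induce_walk_length_eq_dist hG hS a b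
  obtain ⟨r, hr⟩ := Reachable.exists_walk_length_eq_dist ⟨q⟩
  refine le_antisymm (hq ▸ dist_le q) ?_
  calc G.dist a b ≤ (r.map (Embedding.induce S).toHom).length := dist_le _
    _ = (G.induce S).dist a b := by rw [Walk.length_map, hr]

def BroadcastDominates (G : SimpleGraph V) (f : V → ℕ) (u : V) : Prop :=
  ∃ v, 1 ≤ f v ∧ G.Reachable u v ∧ G.dist u v ≤ f v

lemma isDomKBroadcast_iff {k : ℕ} {f : V → ℕ} :
    IsDomKBroadcast G k f ↔ (∀ v, f v ≤ k) ∧ ∀ u, BroadcastDominates G f u := Iff.rfl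

section PushToSupports

variable [Fintype V] (G) (k : ℕ) (f : V → ℕ)

open Classical in
noncomputable def pushToSupports (v : V) : ℕ :=
  if IsLeaf G v then 0 else min k (f v + ∑ u with IsLeaf G u ∧ G.Adj u v, f u)

variable {G k f}

lemma pushToSupports_le (v : V) : pushToSupports G k f v ≤ k := by
  unfold pushToSupports
  split_ifs
  exacts [Nat.zero_le _, min_le_left _ _]

lemma pushToSupports_of_isLeaf {v : V} (hv : IsLeaf G v) : pushToSupports G k f v = 0 :=
  if_pos hv

lemma le_pushToSupports_of_adj (hfk : ∀ v, f v ≤ k) {u v : V} (hu : IsLeaf G u)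
    (huv : G.Adj u v) (hv : ¬ IsLeaf G v) : f u ≤ pushToSupports G k f v := by
  classical
  rw [pushToSupports, if_neg hv]
  exact le_min (hfk u) (le_add_left (single_le_sum (fun _ _ => Nat.zero_le _)
    (mem_filter.mpr ⟨mem_univ u, hu, huv⟩)))

lemma le_pushToSupports (hfk : ∀ v, f v ≤ k) {v : V} (hv : ¬ IsLeaf G v) :
    f v ≤ pushToSupports G k f v := by
  rw [pushToSupports, if_neg hv]
  exact le_min (hfk v) (le_add_right le_rfl)

variable (hG : G.Connected) (hcard : 3 ≤ Fintype.card V)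
include hG hcard

lemma BroadcastDominates.pushToSupports (hfk : ∀ v, f v ≤ k) {x : V}
    (hx : BroadcastDominates G f x) : BroadcastDominates G (pushToSupports G k f) x := by
  obtain ⟨w, hw, -, hxw⟩ := hx
  by_cases hwl : IsLeaf G w
  · obtain ⟨v, hwv⟩ := hwl.exists
    have hfv := le_pushToSupports_of_adj hfk hwl hwv (hwl.not_isLeaf_of_adj hG hcard hwv)
    refine ⟨v, hw.trans hfv, hG.preconnected x v, ?_⟩
    by_cases hxw' : x = w
    · subst hxw'
      rw [dist_eq_one_iff_adj.mpr hwv]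
      exact hw.trans hfv
    · have := hwl.dist_eq_dist_add_one hG hwv hxw'
      rw [dist_comm] at hxw ⊢
      omega
  · have hfw := le_pushToSupports hfk hwl
    exact ⟨w, hw.trans hfw, hG.preconnected x w, hxw.trans hfw⟩

lemma finsum_pushToSupports_le : ∑ᶠ v, pushToSupports G k f v ≤ ∑ᶠ v, f v := by
  classical
  rw [finsum_eq_sum_of_fintype, finsum_eq_sum_of_fintype]
  -- each leaf is counted once, at its unique neighbour, which is not a leaf
  have hleaves : ∑ v with ¬ IsLeaf G v, ∑ u with IsLeaf G u ∧ G.Adj u v, f u =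
      ∑ u with IsLeaf G u, f u := by
    rw [sum_comm' (t' := univ.filter (IsLeaf G))
      (s' := fun u => univ.filter fun v => ¬ IsLeaf G v ∧ G.Adj u v)
      (by intros; simp only [mem_filter, mem_univ, true_and]; tauto)]
    refine sum_congr rfl fun u hu => ?_
    have hul : IsLeaf G u := (mem_filter.mp hu).2
    obtain ⟨w, huw⟩ := hul.exists
    have : (univ.filter fun v => ¬ IsLeaf G v ∧ G.Adj u v) = {w} := by
      ext v
      simp only [mem_filter, mem_univ, true_and, mem_singleton]
      exact ⟨fun h => hul.unique h.2 huw,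
        fun h => h ▸ ⟨hul.not_isLeaf_of_adj hG hcard huw, huw⟩⟩
    rw [this, sum_singleton]
  calc ∑ v, pushToSupports G k f v
      = ∑ v with ¬ IsLeaf G v, pushToSupports G k f v :=
        (sum_filter_of_ne (p := fun v => ¬ IsLeaf G v) fun _ _ h hv =>
          h (pushToSupports_of_isLeaf hv)).symm
    _ ≤ ∑ v with ¬ IsLeaf G v, (f v + ∑ u with IsLeaf G u ∧ G.Adj u v, f u) := by
        refine sum_le_sum fun v hv => ?_
        rw [pushToSupports, if_neg (mem_filter.mp hv).2]
        exact min_le_right _ _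
    _ = ∑ v, f v := by
        rw [sum_add_distrib, hleaves, add_comm, sum_filter_add_sum_filter_not]

end PushToSupports

lemma BroadcastDominates.of_twin (hG : G.Connected) {F : V → ℕ}
    (hF : ∀ v, IsLeaf G v → F v = 0) {u x v : V} (hu : IsLeaf G u) (huv : G.Adj u v)
    (hx : IsLeaf G x) (hxv : G.Adj x v) (hdom : BroadcastDominates G F u) :
    BroadcastDominates G F x := by
  obtain ⟨w, hw, -, huw⟩ := hdom
  have hwl : ¬ IsLeaf G w := fun h => by simp [hF w h] at hw
  have hwu : w ≠ u := fun h => hwl (h ▸ hu)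
  have hwx : w ≠ x := fun h => hwl (h ▸ hx)
  refine ⟨w, hw, hG.preconnected x w, ?_⟩
  have h₁ := hu.dist_eq_dist_add_one hG huv hwu
  have h₂ := hx.dist_eq_dist_add_one hG hxv hwx
  omega

lemma BroadcastDominates.induce (hG : G.Connected) {S : Set V}
    (hS : ∀ u, ¬ IsLeaf G u → u ∈ S) {F : V → ℕ} (hF : ∀ v ∉ S, F v = 0) {x : S}
    (hx : BroadcastDominates G F x) : BroadcastDominates (G.induce S) (fun v : S => F v) x := by
  obtain ⟨w, hw, -, hxw⟩ := hx
  have hwS : w ∈ S := by_contra fun h => by simp [hF w h] at hw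
  obtain ⟨q, hq⟩ := exists_induce_walk_length_eq_dist hG hS x ⟨w, hwS⟩
  exact ⟨⟨w, hwS⟩, hw, ⟨q⟩, (induce_dist_eq hG hS x ⟨w, hwS⟩).trans_le hxw⟩

lemma BroadcastDominates.of_induce {S : Set V} {g : S → ℕ} {x : S}
    (hx : BroadcastDominates (G.induce S) g x) :
    BroadcastDominates G (Function.extend Subtype.val g 0) x := by
  obtain ⟨w, hw, ⟨q⟩, hxw⟩ := hx
  obtain ⟨r, hr⟩ := Reachable.exists_walk_length_eq_dist ⟨q⟩
  have hext : Function.extend Subtype.val g 0 w = g w := Subtype.val_injective.extend_apply _ _ _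
  refine ⟨w, hext ▸ hw, ⟨r.map (Embedding.induce S).toHom⟩, ?_⟩
  calc G.dist x w ≤ (r.map (Embedding.induce S).toHom).length := dist_le _
    _ ≤ Function.extend Subtype.val g 0 w := by rw [Walk.length_map, hr, hext]; exact hxw

lemma finsum_subtype_eq_finsum {S : Set V} {F : V → ℕ} (hF : ∀ v ∉ S, F v = 0) :
    ∑ᶠ v : S, F v = ∑ᶠ v, F v := by
  rw [finsum_set_coe_eq_finsum_mem, finsum_mem_def, Set.indicator_eq_self.mpr]
  exact fun v hv => by_contra fun h => hv (hF v h)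

section TwinFree

variable [Fintype V] (hG : G.Connected) (hcard : 3 ≤ Fintype.card V) {S : Set V}
  (hS : ∀ u, ¬ IsLeaf G u → u ∈ S) {k : ℕ}
include hG hcard hS

lemma exists_induce_isDomKBroadcast_le {f : V → ℕ} (hf : IsDomKBroadcast G k f) :
    ∃ g : S → ℕ, IsDomKBroadcast (G.induce S) k g ∧ ∑ᶠ v, g v ≤ ∑ᶠ v, f v := by
  obtain ⟨hfk, hfdom⟩ := isDomKBroadcast_iff.mp hf
  have hF : ∀ v ∉ S, pushToSupports G k f v = 0 := fun v hv =>
    pushToSupports_of_isLeaf (not_imp_comm.mp (hS v) hv)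
  refine ⟨fun v : S => pushToSupports G k f v,
    ⟨fun v => pushToSupports_le (G := G) v,
      fun x => ((hfdom x).pushToSupports hG hcard hfk).induce hG hS hF⟩, ?_⟩
  rw [finsum_subtype_eq_finsum hF]
  exact finsum_pushToSupports_le hG hcard

lemma exists_isDomKBroadcast_le_of_induce
    (hS' : ∀ v, (∃ u, IsLeaf G u ∧ G.Adj u v) → ∃ u, IsLeaf G u ∧ G.Adj u v ∧ u ∈ S)
    {g : S → ℕ} (hg : IsDomKBroadcast (G.induce S) k g) :
    ∃ f : V → ℕ, IsDomKBroadcast G k f ∧ ∑ᶠ v, f v ≤ ∑ᶠ v, g v := by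
  obtain ⟨hgk, hgdom⟩ := isDomKBroadcast_iff.mp hg
  set F := Function.extend Subtype.val g 0
  have hFS : ∀ v ∉ S, F v = 0 := fun v hv =>
    Function.extend_apply' _ _ _ fun ⟨w, hw⟩ => hv (hw ▸ w.2)
  have hFk : ∀ v, F v ≤ k := fun v => by
    by_cases hv : v ∈ S
    · exact (Subtype.val_injective.extend_apply g 0 ⟨v, hv⟩).trans_le (hgk _)
    · exact (hFS v hv).trans_le (Nat.zero_le k)
  have hdomS : ∀ x ∈ S, BroadcastDominates G (pushToSupports G k F) x := fun x hx =>
    (hgdom ⟨x, hx⟩).of_induce.pushToSupports hG hcard hFk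
  refine ⟨pushToSupports G k F, ⟨pushToSupports_le, fun x => ?_⟩, ?_⟩
  · by_cases hx : x ∈ S
    · exact hdomS x hx
    have hxl := not_imp_comm.mp (hS x) hx
    obtain ⟨v, hxv⟩ := hxl.exists
    obtain ⟨u, hu, huv, huS⟩ := hS' v ⟨x, hxl, hxv⟩
    exact (hdomS u huS).of_twin hG (fun _ => pushToSupports_of_isLeaf) hu huv hxl hxv
  · calc ∑ᶠ v, pushToSupports G k F v ≤ ∑ᶠ v, F v := finsum_pushToSupports_le hG hcard
      _ = ∑ᶠ v : S, g v := by
        rw [← finsum_subtype_eq_finsum hFS]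
        exact finsum_congr fun v => Subtype.val_injective.extend_apply g 0 v

end TwinFree

end

theorem gammaBk_twin_free_general {V : Type*} [Fintype V] (T : SimpleGraph V)
    (hT : T.IsTree) (hcard : 3 ≤ Fintype.card V) (S : Set V)
    (hS1 : ∀ u, ¬ IsLeaf T u → u ∈ S)
    (hS2 : ∀ v, (∃ u, IsLeaf T u ∧ T.Adj u v) →
      ∃! u, IsLeaf T u ∧ T.Adj u v ∧ u ∈ S)
    (k : ℕ) :
    gammaBk T k = gammaBk (T.induce S) k := by
  apply csInf_eq_csInf_of_forall_exists_le
  · rintro _ ⟨f, hf, rfl⟩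
    obtain ⟨g, hg, hcost⟩ := exists_induce_isDomKBroadcast_le hT.connected hcard hS1 hf
    exact ⟨_, ⟨g, hg, rfl⟩, hcost⟩
  · rintro _ ⟨g, hg, rfl⟩
    obtain ⟨f, hf, hcost⟩ := exists_isDomKBroadcast_le_of_induce hT.connected hcard hS1
      (fun v hv => (hS2 v hv).exists) hg
    exact ⟨_, ⟨f, hf, rfl⟩, hcost⟩

theorem gammaBk_twin_free {V : Type*} [Fintype V] (T : SimpleGraph V)
    (hT : T.IsTree) (hcard : 3 ≤ Fintype.card V) (S : Set V)
    (hS1 : ∀ u, ¬ IsLeaf T u → u ∈ S)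
    (hS2 : ∀ v, (∃ u, IsLeaf T u ∧ T.Adj u v) →
      ∃! u, IsLeaf T u ∧ T.Adj u v ∧ u ∈ S)
    (k : ℕ) (hk : 1 ≤ k) :
    gammaBk T k = gammaBk (T.induce S) k :=
  gammaBk_twin_free_general T hT hcard S hS1 hS2 k
end

section
/- Let G be a finite connected graph and k ≥ 3 an integer. Then γ_{B_k}(G) = min{ γ_{B_k}(T) : T is a spanning tree of G }, i.e., there exists a spanning tree T of G with γ_{B_k}(T) = γ_{B_k}(G). -/
/-!
Take a minimum dominating `k`-broadcast `f` of `G` and the slack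
`s u = min {d(u, c) + (k - f c) | f c ≥ 1}`, which drops by at most one along an edge. Let each
vertex that has a neighbour of slack one less point to such a neighbour: the pointers decrease `s`,
so they form a forest, and following them from `u` for `s u - s r` steps ends at a vertex `r`
whose slack cannot drop. Such an `r` broadcasts itself with `s r = k - f r`, so since `s u ≤ k`
the forest path has length at most `f r`. Hence `f` still dominates in any spanning tree containing
the forest, giving `γ_{B_k}(T) ≤ γ_{B_k}(G)`; the reverse inequality holds for every spanning
subgraph.
-/

namespace SimpleGraph

variable {V : Type*}

theorem isAcyclic_fromRel_of_lt {par : V → V} (h : V → ℕ)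
    (hpar : ∀ u, par u ≠ u → h (par u) < h u) :
    (fromRel fun u v => par u = v).IsAcyclic := by
  have h_iterate_le : ∀ m u, h (par^[m] u) ≤ h u := by
    intro m
    induction m with
    | zero => simp
    | succ m ih =>
      intro u
      rw [Function.iterate_succ_apply]
      refine (ih _).trans ?_
      by_cases hu : par u = u
      · rw [hu]
      · exact (hpar u hu).le
  -- only the edge `{a, par a}` leaves the set of vertices whose pointer chain reaches `a`
  have hbridge : ∀ a, par a ≠ a → (fromRel fun u v => par u = v).IsBridge s(a, par a) := by
    intro a ha ⟨p⟩
    obtain ⟨d, -, ⟨m, hm⟩, hd⟩ := p.exists_boundary_dart {x | ∃ m, par^[m] x = a} ⟨0, rfl⟩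
      fun ⟨m, hm⟩ => (hpar a ha).not_ge (by simpa only [hm] using h_iterate_le m (par a))
    obtain ⟨⟨-, hxy | hyx⟩, hde⟩ := deleteEdges_adj.mp d.adj
    · cases m with
      | zero =>
        rw [Function.iterate_zero_apply] at hm
        exact hde (by rw [← hxy, hm]; rfl)
      | succ m => exact hd ⟨m, by rwa [← hxy, ← Function.iterate_succ_apply]⟩
    · exact hd ⟨m + 1, by rwa [Function.iterate_succ_apply, hyx]⟩
  rw [isAcyclic_iff_forall_adj_isBridge]
  rintro a b ⟨hab, rfl | rfl⟩
  · exact hbridge a (Ne.symm hab)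
  · rw [Sym2.eq_swap]
    exact hbridge b hab

theorem exists_isAcyclic_descent (G : SimpleGraph V) (h : V → ℕ) :
    ∃ F ≤ G, F.IsAcyclic ∧ ∀ u, ∃ r, (∀ w, G.Adj r w → h w + 1 ≠ h r) ∧
      ∃ p : F.Walk u r, p.length + h r = h u := by
  have hparent : ∀ u, ∃ w, (w = u ∧ ∀ x, G.Adj u x → h x + 1 ≠ h u) ∨ (G.Adj u w ∧ h w + 1 = h u) := by
    intro u
    by_cases hu : ∃ w, G.Adj u w ∧ h w + 1 = h u
    · obtain ⟨w, hw⟩ := hu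
      exact ⟨w, .inr hw⟩
    · push Not at hu
      exact ⟨u, .inl ⟨rfl, hu⟩⟩
  choose par hpar using hparent
  have hpar_ne : ∀ u, par u ≠ u → G.Adj u (par u) ∧ h (par u) + 1 = h u :=
    fun u hu => (hpar u).resolve_left fun hfix => hu hfix.1
  refine ⟨fromRel fun u v => par u = v, ?_, isAcyclic_fromRel_of_lt h fun u hu => ?_, fun u => ?_⟩
  · rintro a b ⟨hab, rfl | rfl⟩
    · exact (hpar_ne a (Ne.symm hab)).1
    · exact (hpar_ne b hab).1.symm
  · have := (hpar_ne u hu).2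
    omega
  induction u using (measure h).wf.induction with
  | h u ih =>
    by_cases hu : par u = u
    · refine ⟨u, ?_, .nil, Nat.zero_add _⟩
      rcases hpar u with ⟨-, hroot⟩ | ⟨hadj, -⟩
      · exact hroot
      · exact absurd (hu ▸ hadj) G.irrefl
    · obtain ⟨-, hlt⟩ := hpar_ne u hu
      obtain ⟨r, hr, p, hp⟩ := ih (par u) (show h (par u) < h u by omega)
      exact ⟨r, hr, .cons ((fromRel_adj _ _ _).mpr ⟨Ne.symm hu, .inl rfl⟩) p,
        by simp only [Walk.length_cons]; omega⟩

theorem Connected.exists_adj_dist_add_one_eq {G : SimpleGraph V} (hG : G.Connected) {u v : V}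
    (huv : u ≠ v) : ∃ w, G.Adj u w ∧ G.dist w v + 1 = G.dist u v := by
  obtain ⟨p, hp⟩ := hG.exists_walk_length_eq_dist u v
  cases p with
  | nil => exact absurd rfl huv
  | @cons _ w _ hadj q =>
    refine ⟨w, hadj, le_antisymm ?_ ?_⟩
    · have := dist_le q
      simp only [Walk.length_cons] at hp
      omega
    · have := hG.dist_triangle (u := u) (v := w) (w := v)
      rw [dist_eq_one_iff_adj.mpr hadj] at this
      omega

end SimpleGraph

open SimpleGraph

section Broadcast

variable {V : Type*} {G H : SimpleGraph V} {k : ℕ} {f : V → ℕ}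

theorem IsDomKBroadcast.mono (hHG : H ≤ G) (hf : IsDomKBroadcast H k f) :
    IsDomKBroadcast G k f := by
  refine ⟨hf.1, fun u => ?_⟩
  obtain ⟨v, hv, hreach, hdist⟩ := hf.2 u
  exact ⟨v, hv, hreach.mono hHG, (hreach.dist_anti hHG).trans hdist⟩

/-- `k` minus the largest surplus `f c - d(u, c)` of a broadcasting vertex `c` over `u`;
the shift by `k` keeps it in `ℕ`. -/
noncomputable def broadcastSlack (G : SimpleGraph V) (k : ℕ) (f : V → ℕ) (u : V) : ℕ :=
  sInf {n | ∃ c, 1 ≤ f c ∧ G.dist u c + (k - f c) = n}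

theorem broadcastSlack_le_dist_add {u c : V} (hc : 1 ≤ f c) :
    broadcastSlack G k f u ≤ G.dist u c + (k - f c) :=
  Nat.sInf_le ⟨c, hc, rfl⟩

theorem IsDomKBroadcast.exists_broadcastSlack_eq (hf : IsDomKBroadcast G k f) (u : V) :
    ∃ c, 1 ≤ f c ∧ G.dist u c + (k - f c) = broadcastSlack G k f u := by
  obtain ⟨v, hv, -⟩ := hf.2 u
  exact Nat.sInf_mem (s := {n | ∃ c, 1 ≤ f c ∧ G.dist u c + (k - f c) = n}) ⟨_, v, hv, rfl⟩

theorem IsDomKBroadcast.broadcastSlack_le (hf : IsDomKBroadcast G k f) (u : V) :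
    broadcastSlack G k f u ≤ k := by
  obtain ⟨v, hv, -, hdist⟩ := hf.2 u
  have := broadcastSlack_le_dist_add (G := G) (k := k) (u := u) hv
  have := hf.1 v
  omega

theorem broadcastSlack_le_broadcastSlack_add_one (hG : G.Connected) (hf : IsDomKBroadcast G k f)
    {u w : V} (hadj : G.Adj u w) : broadcastSlack G k f u ≤ broadcastSlack G k f w + 1 := by
  obtain ⟨c, hc, hcw⟩ := hf.exists_broadcastSlack_eq w
  have h_slack := broadcastSlack_le_dist_add (G := G) (k := k) (u := u) hc
  have h_triangle := hG.dist_triangle (u := u) (v := w) (w := c)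
  rw [dist_eq_one_iff_adj.mpr hadj] at h_triangle
  omega

theorem IsDomKBroadcast.one_le_and_broadcastSlack_eq (hG : G.Connected)
    (hf : IsDomKBroadcast G k f) {r : V}
    (hr : ∀ w, G.Adj r w → broadcastSlack G k f w + 1 ≠ broadcastSlack G k f r) :
    1 ≤ f r ∧ broadcastSlack G k f r = k - f r := by
  obtain ⟨c, hc, hcr⟩ := hf.exists_broadcastSlack_eq r
  obtain rfl | hne := eq_or_ne r c
  · rw [dist_self, zero_add] at hcr
    exact ⟨hc, hcr.symm⟩
  obtain ⟨w, hadj, hw⟩ := hG.exists_adj_dist_add_one_eq hne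
  have h_slack := broadcastSlack_le_dist_add (G := G) (k := k) (u := w) hc
  have h_lip := broadcastSlack_le_broadcastSlack_add_one hG hf hadj
  exact absurd (by omega) (hr w hadj)

theorem IsDomKBroadcast.exists_isAcyclic_le (hG : G.Connected) (hf : IsDomKBroadcast G k f) :
    ∃ F ≤ G, F.IsAcyclic ∧ IsDomKBroadcast F k f := by
  obtain ⟨F, hFG, hF, hdescent⟩ := G.exists_isAcyclic_descent (broadcastSlack G k f)
  refine ⟨F, hFG, hF, hf.1, fun u => ?_⟩
  obtain ⟨r, hr, p, hp⟩ := hdescent u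
  obtain ⟨hfr, hslack⟩ := hf.one_le_and_broadcastSlack_eq hG hr
  have := hf.broadcastSlack_le u
  have := hf.1 r
  exact ⟨r, hfr, p.reachable, (dist_le p).trans (by omega)⟩

theorem gammaBk_le_finsum (hf : IsDomKBroadcast G k f) : gammaBk G k ≤ ∑ᶠ v, f v :=
  Nat.sInf_le ⟨f, hf, rfl⟩

theorem exists_isDomKBroadcast_finsum_eq_gammaBk (h : ∃ f, IsDomKBroadcast G k f) :
    ∃ f, IsDomKBroadcast G k f ∧ ∑ᶠ v, f v = gammaBk G k := by
  obtain ⟨f, hf⟩ := h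
  exact Nat.sInf_mem (s := {c | ∃ f, IsDomKBroadcast G k f ∧ ∑ᶠ v, f v = c}) ⟨_, f, hf, rfl⟩

theorem gammaBk_eq_zero (h : ¬∃ f, IsDomKBroadcast G k f) : gammaBk G k = 0 := by
  rw [gammaBk, Nat.sInf_eq_zero]
  exact .inr (Set.eq_empty_of_forall_notMem fun _ ⟨f, hf, _⟩ => h ⟨f, hf⟩)

theorem gammaBk_le_gammaBk (hHG : H ≤ G) (h : ∃ f, IsDomKBroadcast H k f) :
    gammaBk G k ≤ gammaBk H k :=
  let ⟨_, hf, hsum⟩ := exists_isDomKBroadcast_finsum_eq_gammaBk h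
  hsum ▸ gammaBk_le_finsum (hf.mono hHG)

end Broadcast

theorem exists_spanning_tree_gammaBk_eq_general {V : Type*} (G : SimpleGraph V)
    (hG : G.Connected) (k : ℕ) :
    ∃ T : SimpleGraph V, T ≤ G ∧ T.IsTree ∧ gammaBk T k = gammaBk G k := by
  by_cases hdom : ∃ f, IsDomKBroadcast G k f
  · obtain ⟨f, hf, hsum⟩ := exists_isDomKBroadcast_finsum_eq_gammaBk hdom
    obtain ⟨F, hFG, hF, hfF⟩ := hf.exists_isAcyclic_le hG
    obtain ⟨T, hFT, hTG, hT⟩ := hG.exists_isTree_le_of_le_of_isAcyclic hFG hF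
    have hfT := hfF.mono hFT
    exact ⟨T, hTG, hT, le_antisymm (hsum ▸ gammaBk_le_finsum hfT)
      (gammaBk_le_gammaBk hTG ⟨f, hfT⟩)⟩
  · obtain ⟨T, hTG, hT⟩ := hG.exists_isTree_le
    refine ⟨T, hTG, hT, ?_⟩
    rw [gammaBk_eq_zero hdom, gammaBk_eq_zero fun ⟨f, hf⟩ => hdom ⟨f, hf.mono hTG⟩]

theorem exists_spanning_tree_gammaBk_eq {V : Type*} [Fintype V] (G : SimpleGraph V)
    (hG : G.Connected) (k : ℕ) (hk : 3 ≤ k) :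
    ∃ T : SimpleGraph V, T ≤ G ∧ T.IsTree ∧ gammaBk T k = gammaBk G k :=
  exists_spanning_tree_gammaBk_eq_general G hG k
end

section
/- For every integer k ≥ 3, there exists a tree T with rad(T) > k whose dominating k-broadcast number equals ⌈ ((k+2)/(k+1)) · (|V(T)|/3) ⌉; namely the tree T_k obtained from a path u₁...u_{2k+1} by attaching leaves to u₁, u_{2k+1}, and all u_i with even i, which satisfies γ_{B_k}(T_k) = k+2. -/
/-- The index (0-based) of the path vertex to which the `j`-th pendant leaf is attached:
leaf `0` to `u₁`, leaf `k+1` to `u_{2k+1}`, and leaf `j` (for `1 ≤ j ≤ k`)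
to the even-indexed (1-based) vertex `u_{2j}`. -/
def attachIdx (k : ℕ) (j : Fin (k + 2)) : ℕ :=
  if (j : ℕ) = 0 then 0 else if (j : ℕ) = k + 1 then 2 * k else 2 * (j : ℕ) - 1

/-- The tree `T_k`: a path `u₁ u₂ … u_{2k+1}` (here `Sum.inl i` is `u_{i+1}`)
with a pendant leaf attached to `u₁`, to `u_{2k+1}`, and to each `u_i` with `i` even. -/
def Tk (k : ℕ) : SimpleGraph (Fin (2 * k + 1) ⊕ Fin (k + 2)) :=
  SimpleGraph.fromRel (fun x y =>
    match x, y with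
    | Sum.inl i, Sum.inl j => (i : ℕ) + 1 = (j : ℕ)
    | Sum.inr j, Sum.inl i => (i : ℕ) = attachIdx k j
    | _, _ => False)

/-!
In `T_k` the distance between distinct vertices is `|p x - p y| + ε x + ε y`, where `p` is the
position along the spine (a leaf sharing the position of its neighbour) and `ε` marks leaves. So the
two end leaves are `2k + 2` apart, and every vertex has eccentricity greater than `k`.

Broadcasting `k` from `u_k` and `2` from `u_{2k}` dominates `T_k`. Conversely, a vertex
broadcasting with strength `1 ≤ t ≤ k` reaches only leaves whose attachment points lie in a window
of width `2(t - 1) < 2k` around its position. The attachment points `0, 1, 3, …, 2k - 1, 2k` are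
two apart except at the two ends, so such a window holds at most `t` of them, and covering all
`k + 2` leaves costs at least `k + 2`.
-/

open SimpleGraph Finset

section General

variable {V : Type*} {G : SimpleGraph V}

theorem SimpleGraph.exists_walk_length_eq_sub (p : ℕ → V) {a b : ℕ} (hab : a ≤ b)
    (hp : ∀ m, a ≤ m → m < b → G.Adj (p m) (p (m + 1))) :
    ∃ w : G.Walk (p a) (p b), w.length = b - a := by
  induction b, hab using Nat.le_induction with
  | base => exact ⟨.nil, by simp⟩
  | succ b hab ih =>
    obtain ⟨w, hw⟩ := ih fun m h₁ h₂ => hp m h₁ (by omega)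
    exact ⟨w.concat (hp b hab (by omega)), by rw [Walk.length_concat, hw]; omega⟩

theorem SimpleGraph.Reachable.le_dist_of_le_add_one_of_adj {x y : V} (hxy : G.Reachable x y)
    (F : V → ℕ) (hy : F y = 0) (hF : ∀ u u', G.Adj u u' → F u ≤ F u' + 1) :
    F x ≤ G.dist x y := by
  obtain ⟨w, hw⟩ := hxy.exists_walk_length_eq_dist
  rw [← hw]
  clear hw hxy
  induction w with
  | nil => simp [hy]
  | cons h w ih => rw [Walk.length_cons]; linarith [hF _ _ h, ih hy]

theorem SimpleGraph.Connected.dist_le_two_mul_grad [Fintype V] (hG : G.Connected) (a b : V) :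
    G.dist a b ≤ 2 * grad G := by
  have hne : {e | ∃ v, ∀ u, G.dist v u ≤ e}.Nonempty :=
    ⟨univ.sup (G.dist a), a, fun u => le_sup (mem_univ u)⟩
  obtain ⟨v, hv⟩ := Nat.sInf_mem hne
  calc G.dist a b ≤ G.dist a v + G.dist v b := hG.dist_triangle
    _ = G.dist v a + G.dist v b := by rw [dist_comm]
    _ ≤ 2 * grad G := by have := hv a; have := hv b; rw [grad]; omega

theorem gammaBk_eq_of_isDomKBroadcast {k : ℕ} {f : V → ℕ} (hf : IsDomKBroadcast G k f)
    (hmin : ∀ g, IsDomKBroadcast G k g → ∑ᶠ v, f v ≤ ∑ᶠ v, g v) :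
    gammaBk G k = ∑ᶠ v, f v :=
  le_antisymm (Nat.sInf_le ⟨f, hf, rfl⟩)
    (le_csInf ⟨_, f, hf, rfl⟩ fun _ ⟨g, hg, hc⟩ => hc ▸ hmin g hg)

theorem card_le_finsum_of_isDomKBroadcast [Fintype V] {ι : Type*} [Fintype ι] {k : ℕ}
    (x : ι → V) (hball : ∀ v t, 1 ≤ t → t ≤ k → #{i | G.dist (x i) v ≤ t} ≤ t)
    {f : V → ℕ} (hf : IsDomKBroadcast G k f) :
    Fintype.card ι ≤ ∑ᶠ v, f v := by
  classical
  choose g hg using hf.2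
  have hfiber : ∀ v, #{i | g (x i) = v} ≤ f v := by
    intro v
    obtain hempty | ⟨i, hi⟩ := (univ.filter fun i => g (x i) = v).eq_empty_or_nonempty
    · simp [hempty]
    have hv : 1 ≤ f v := (mem_filter.1 hi).2 ▸ (hg (x i)).1
    refine (card_le_card fun i hi => ?_).trans (hball v (f v) hv (hf.1 v))
    rw [mem_filter] at hi ⊢
    exact ⟨hi.1, hi.2 ▸ (hg (x i)).2.2⟩
  rw [finsum_eq_sum_of_fintype, ← card_univ,
    card_eq_sum_card_fiberwise (f := fun i => g (x i)) fun _ _ => mem_univ _]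
  exact sum_le_sum fun v _ => hfiber v

end General

namespace Tk

open Sum

variable {k : ℕ}

abbrev Vertex (k : ℕ) : Type := Fin (2 * k + 1) ⊕ Fin (k + 2)

/-- The spine position of a vertex: `u_{i+1}` has position `i`, and a leaf has the position of
its neighbour. -/
def pos : Vertex k → ℕ := Sum.elim (↑) (attachIdx k)

def depth : Vertex k → ℕ := Sum.elim (fun _ => 0) (fun _ => 1)

lemma attachIdx_le (j : Fin (k + 2)) : attachIdx k j ≤ 2 * k := by
  have := j.isLt
  unfold attachIdx
  split_ifs <;> omega

lemma pos_le (x : Vertex k) : pos x ≤ 2 * k := by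
  cases x with
  | inl i => exact Nat.le_of_lt_succ i.isLt
  | inr j => exact attachIdx_le j

lemma depth_le_one (x : Vertex k) : depth x ≤ 1 := by
  cases x <;> simp [depth]

def base (x : Vertex k) : Fin (2 * k + 1) := ⟨pos x, Nat.lt_succ_of_le (pos_le x)⟩

lemma adj_inl_inl {i i' : Fin (2 * k + 1)} (h : (i : ℕ) + 1 = i') : (Tk k).Adj (inl i) (inl i') := by
  refine (fromRel_adj _ _ _).2 ⟨fun hii' => ?_, Or.inl h⟩
  cases hii'
  omega

lemma adj_inr_base (j : Fin (k + 2)) : (Tk k).Adj (inr j) (inl (base (inr j))) :=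
  (fromRel_adj _ _ _).2 ⟨inr_ne_inl, Or.inl rfl⟩

lemma pos_depth_of_adj {x y : Vertex k} (h : (Tk k).Adj x y) :
    (pos x = pos y ∧ depth x + depth y = 1) ∨
      (Nat.dist (pos x) (pos y) = 1 ∧ depth x = 0 ∧ depth y = 0) := by
  obtain ⟨hne, h⟩ := (fromRel_adj _ _ _).1 h
  rcases x with i | j <;> rcases y with i' | j' <;> simp only [or_false, false_or, or_self] at h
  · have : (i : ℕ) ≠ i' := fun hii' => hne (congrArg inl (Fin.ext hii'))
    right
    simp only [pos, depth, Sum.elim_inl, Nat.dist, and_true]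
    omega
  · exact Or.inl ⟨h, rfl⟩
  · exact Or.inl ⟨h.symm, rfl⟩

lemma exists_walk_inl {i i' : Fin (2 * k + 1)} (h : i ≤ i') :
    ∃ w : (Tk k).Walk (inl i) (inl i'), w.length = i' - i := by
  let p : ℕ → Vertex k := fun m => inl ⟨min m (2 * k), by omega⟩
  have hp : ∀ i : Fin (2 * k + 1), p i = inl i := fun i => by
    simp [p, min_eq_left (Nat.le_of_lt_succ i.isLt)]
  obtain ⟨w, hw⟩ := exists_walk_length_eq_sub p h fun m _ hm =>
    adj_inl_inl (by simp only; omega)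
  exact ⟨w.copy (hp i) (hp i'), by rw [Walk.length_copy, hw]⟩

lemma reachable_inl (i i' : Fin (2 * k + 1)) : (Tk k).Reachable (inl i) (inl i') := by
  rcases le_total i i' with h | h
  · exact ⟨(exists_walk_inl h).choose⟩
  · exact ⟨(exists_walk_inl h).choose.reverse⟩

lemma dist_inl_le (i i' : Fin (2 * k + 1)) : (Tk k).dist (inl i) (inl i') ≤ Nat.dist i i' := by
  wlog h : i ≤ i' generalizing i i'
  · rw [dist_comm, Nat.dist_comm]
    exact this i' i (le_of_not_ge h)
  obtain ⟨w, hw⟩ := exists_walk_inl h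
  exact (dist_le w).trans (by simp only [hw, Nat.dist]; omega)

lemma reachable_base (x : Vertex k) : (Tk k).Reachable x (inl (base x)) := by
  cases x with
  | inl i => rfl
  | inr j => exact (adj_inr_base j).reachable

lemma dist_base_le (x : Vertex k) : (Tk k).dist x (inl (base x)) ≤ depth x := by
  cases x with
  | inl i => simp [base, pos, depth]
  | inr j => simp [depth, dist_eq_one_iff_adj.2 (adj_inr_base j)]

lemma connected : (Tk k).Connected :=
  ⟨fun x y => (reachable_base x).trans ((reachable_inl _ _).trans (reachable_base y).symm)⟩

lemma dist_le (x y : Vertex k) :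
    (Tk k).dist x y ≤ Nat.dist (pos x) (pos y) + depth x + depth y := by
  have hspine := dist_inl_le (base x) (base y)
  have hx := dist_base_le x
  have hy := dist_comm (G := Tk k) ▸ dist_base_le y
  have := connected.dist_triangle (u := x) (v := inl (base x)) (w := y)
  have := connected.dist_triangle (u := inl (base x)) (v := inl (base y)) (w := y)
  simp only [base] at *
  omega

def distFormula (x y : Vertex k) : ℕ :=
  if x = y then 0 else Nat.dist (pos x) (pos y) + depth x + depth y

lemma distFormula_le_of_adj {x x' : Vertex k} (h : (Tk k).Adj x x') (y : Vertex k) :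
    distFormula x y ≤ distFormula x' y + 1 := by
  have := depth_le_one x
  have := depth_le_one x'
  have := Nat.dist.triangle_inequality (pos x) (pos x') (pos y)
  unfold distFormula
  split_ifs with hxy hx'y hx'y
  · omega
  · omega
  · subst hx'y
    rcases pos_depth_of_adj h with ⟨hpos, hdepth⟩ | ⟨hpos, hx, hx'⟩
    · rw [hpos, Nat.dist_self]; omega
    · omega
  · rcases pos_depth_of_adj h with ⟨hpos, hdepth⟩ | ⟨hpos, hx, hx'⟩
    · rw [hpos]; omega
    · omega

lemma dist_eq (x y : Vertex k) : (Tk k).dist x y = distFormula x y := by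
  refine le_antisymm ?_ ((connected.preconnected x y).le_dist_of_le_add_one_of_adj
    (distFormula · y) (by simp [distFormula]) fun u u' h => distFormula_le_of_adj h y)
  unfold distFormula
  split_ifs with h
  · simp [h]
  · exact dist_le x y

lemma dist_eq_of_ne {x y : Vertex k} (h : x ≠ y) :
    (Tk k).dist x y = Nat.dist (pos x) (pos y) + depth x + depth y := by
  rw [dist_eq, distFormula, if_neg h]

lemma dist_end_leaves : (Tk k).dist (inr 0) (inr (Fin.last (k + 1))) = 2 * k + 2 := by
  rw [dist_eq_of_ne (by simp [Fin.ext_iff])]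
  simp [pos, depth, attachIdx, Nat.dist]

theorem lt_grad : k < grad (Tk k) := by
  have := connected.dist_le_two_mul_grad (inr 0) (inr (Fin.last (k + 1)))
  rw [dist_end_leaves] at this
  omega

/-- Consecutive attachment points are two apart except at the two ends, where they are one apart;
`hd` excludes the pair of end leaves, which would lose at both ends. -/
lemma attachIdx_gap {j₀ j₁ : Fin (k + 2)} (h : j₀ ≤ j₁)
    (hd : Nat.dist (attachIdx k j₀) (attachIdx k j₁) < 2 * k) :
    2 * ((j₁ : ℕ) - j₀) ≤ Nat.dist (attachIdx k j₀) (attachIdx k j₁) + 1 := by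
  have := j₁.isLt
  rw [Fin.le_iff_val_le_val] at h
  unfold attachIdx Nat.dist at *
  split_ifs at * <;> omega

lemma card_attachIdx_near_le (p : ℕ) {r : ℕ} (hr : r < k) :
    #{j | Nat.dist (attachIdx k j) p ≤ r} ≤ r + 1 := by
  set S : Finset (Fin (k + 2)) := {j | Nat.dist (attachIdx k j) p ≤ r}
  obtain hS | hS := S.eq_empty_or_nonempty
  · simp [hS]
  have hmin := (mem_filter.1 (S.min'_mem hS)).2
  have hmax := (mem_filter.1 (S.max'_mem hS)).2
  have hspan := Nat.dist.triangle_inequality (attachIdx k (S.min' hS)) p (attachIdx k (S.max' hS))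
  rw [Nat.dist_comm p] at hspan
  have hgap := attachIdx_gap (S.min'_le _ (S.max'_mem hS)) (by omega)
  calc #S ≤ #(Icc (S.min' hS) (S.max' hS)) :=
        card_le_card fun j hj => mem_Icc.2 ⟨S.min'_le j hj, S.le_max' j hj⟩
    _ ≤ r + 1 := by rw [Fin.card_Icc]; omega

lemma dist_attachIdx_pos_lt {j : Fin (k + 2)} {v : Vertex k} {t : ℕ} (ht : 1 ≤ t)
    (h : (Tk k).dist (inr j) v ≤ t) : Nat.dist (attachIdx k j) (pos v) < t := by
  by_cases hv : inr j = v
  · subst hv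
    rw [show pos (inr j) = attachIdx k j from rfl, Nat.dist_self]
    omega
  · rw [dist_eq_of_ne hv] at h
    simp only [pos, depth, Sum.elim_inr] at h ⊢
    omega

lemma card_leaves_near_le (v : Vertex k) {t : ℕ} (ht₁ : 1 ≤ t) (htk : t ≤ k) :
    #{j | (Tk k).dist (inr j) v ≤ t} ≤ t := by
  calc #{j | (Tk k).dist (inr j) v ≤ t}
      ≤ #{j | Nat.dist (attachIdx k j) (pos v) ≤ t - 1} :=
        card_le_card fun j hj => by
          simp only [mem_filter, mem_univ, true_and] at hj ⊢
          have := dist_attachIdx_pos_lt ht₁ hj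
          omega
    _ ≤ t := by have := card_attachIdx_near_le (k := k) (pos v) (r := t - 1) (by omega); omega

/-- Broadcast `k` from `u_k` and `2` from `u_{2k}`. -/
def broadcast (k : ℕ) : Vertex k → ℕ :=
  Pi.single (inl ⟨k - 1, by omega⟩) k + Pi.single (inl ⟨2 * k - 1, by omega⟩) 2

lemma isDomKBroadcast_broadcast (hk : 2 ≤ k) : IsDomKBroadcast (Tk k) k (broadcast k) := by
  set a : Vertex k := inl ⟨k - 1, by omega⟩
  set b : Vertex k := inl ⟨2 * k - 1, by omega⟩
  have hab : a ≠ b := by simp [a, b, Fin.ext_iff]; omega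
  have hfa : broadcast k a = k := by simp [broadcast, a, b, hab]
  have hfb : broadcast k b = 2 := by simp [broadcast, a, b, hab.symm]
  refine ⟨fun v => ?_, fun u => ?_⟩
  · by_cases hva : v = a
    · rw [hva, hfa]
    by_cases hvb : v = b
    · rw [hvb, hfb]; omega
    simp [broadcast, a, b, hva, hvb]
  have hu := dist_le u
  have := pos_le u
  have := depth_le_one u
  by_cases hleft : pos u + 2 ≤ 2 * k
  · refine ⟨a, by omega, connected.preconnected _ _, (hu a).trans ?_⟩
    simp only [hfa, a, pos, depth, Sum.elim_inl, Nat.dist] at *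
    omega
  · refine ⟨b, by omega, connected.preconnected _ _, (hu b).trans ?_⟩
    simp only [hfb, b, pos, depth, Sum.elim_inl, Nat.dist] at *
    omega

lemma finsum_broadcast : ∑ᶠ v, broadcast k v = k + 2 := by
  simp [finsum_eq_sum_of_fintype, broadcast, sum_add_distrib]

theorem gammaBk_eq (hk : 2 ≤ k) : gammaBk (Tk k) k = k + 2 := by
  rw [gammaBk_eq_of_isDomKBroadcast (isDomKBroadcast_broadcast hk), finsum_broadcast]
  intro f hf
  calc ∑ᶠ v, broadcast k v = Fintype.card (Fin (k + 2)) := by rw [finsum_broadcast, Fintype.card_fin]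
    _ ≤ ∑ᶠ v, f v := card_le_finsum_of_isDomKBroadcast inr
        (fun v _ ht₁ htk => card_leaves_near_le v ht₁ htk) hf

end Tk

theorem Tk_attains_bound (k : ℕ) (hk : 3 ≤ k) :
    k < grad (Tk k) ∧
    (gammaBk (Tk k) k : ℤ) =
      ⌈((k : ℚ) + 2) / ((k : ℚ) + 1) *
        ((Fintype.card (Fin (2 * k + 1) ⊕ Fin (k + 2)) : ℚ) / 3)⌉ ∧
    gammaBk (Tk k) k = k + 2 := by
  have hγ : gammaBk (Tk k) k = k + 2 := Tk.gammaBk_eq (by omega)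
  have hn : (Fintype.card (Fin (2 * k + 1) ⊕ Fin (k + 2)) : ℚ) / 3 = k + 1 := by
    simp only [Fintype.card_sum, Fintype.card_fin]
    push_cast
    ring
  refine ⟨Tk.lt_grad, ?_, hγ⟩
  rw [hγ, hn, div_mul_cancel₀ _ (by positivity)]
  exact_mod_cast (Int.ceil_natCast (k + 2)).symm
end

section
/- Let G be a finite connected graph and k ≥ 1 an integer. If f is a dominating k-broadcast on G assigning positive value to a leaf u with support vertex v, then the function g defined by g(u) = 0, g(v) = max(f(u), f(v)), and g(w) = f(w) otherwise, is a dominating k-broadcast on G with cost ω(g) ≤ ω(f). -/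
/-!
A shortest walk from any other vertex to the leaf `u` enters `u` through its support vertex `v`,
so `v` is strictly closer to every vertex other than `u`. Hence a broadcast of strength `f u ≥ 1`
from `v` hears everything that the broadcast from `u` hears (`u` itself included, at distance `1`),
and moving the value of `u` onto `v` by a maximum keeps domination without raising the cost.
-/

open SimpleGraph

section Leaf

variable {V : Type*} {G : SimpleGraph V} {u v x : V}

lemma dist_add_one_le_dist_of_isLeaf (hleaf : IsLeaf G u) (hsupp : G.Adj u v)
    (hxu : G.Reachable x u) (hx : x ≠ u) : G.dist x v + 1 ≤ G.dist x u := by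
  obtain ⟨p, hp⟩ := hxu.exists_walk_length_eq_dist
  have hnil : ¬ p.Nil := Walk.not_nil_of_ne hx
  have hpen : p.penultimate = v := hleaf.unique (p.adj_penultimate hnil).symm hsupp
  calc G.dist x v + 1 = G.dist x p.penultimate + 1 := by rw [hpen]
    _ ≤ p.dropLast.length + 1 := by gcongr; exact dist_le _
    _ = G.dist x u := by rw [Walk.length_dropLast_add_one hnil, hp]

lemma dist_le_of_dist_leaf_le (hleaf : IsLeaf G u) (hsupp : G.Adj u v)
    (hxu : G.Reachable x u) {r : ℕ} (hr : 1 ≤ r) (hd : G.dist x u ≤ r) : G.dist x v ≤ r := by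
  by_cases hx : x = u
  · subst hx
    rwa [dist_eq_one_iff_adj.mpr hsupp]
  · have := dist_add_one_le_dist_of_isLeaf hleaf hsupp hxu hx
    omega

end Leaf

theorem Fintype.sum_le_sum_of_eq_off_pair {ι M : Type*} [Fintype ι] [DecidableEq ι]
    [AddCommMonoid M] [PartialOrder M] [IsOrderedAddMonoid M] {f g : ι → M} {u v : ι}
    (huv : u ≠ v) (heq : ∀ w, w ≠ u → w ≠ v → g w = f w) (hle : g u + g v ≤ f u + f v) :
    ∑ w, g w ≤ ∑ w, f w := by
  have hcompl : ∑ w ∈ {u, v}ᶜ, g w = ∑ w ∈ {u, v}ᶜ, f w :=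
    Finset.sum_congr rfl fun w hw => by
      simp only [Finset.mem_compl, Finset.mem_insert, Finset.mem_singleton, not_or] at hw
      exact heq w hw.1 hw.2
  rw [← Finset.sum_add_sum_compl {u, v} g, ← Finset.sum_add_sum_compl {u, v} f, hcompl,
    Finset.sum_pair huv, Finset.sum_pair huv]
  exact add_le_add_left hle _

section MoveOffLeaf

variable {V : Type*} [DecidableEq V]

def moveOffLeaf (f : V → ℕ) (u v : V) : V → ℕ :=
  fun w => if w = u then 0 else if w = v then max (f u) (f v) else f w

variable {f : V → ℕ} {u v : V}

lemma le_moveOffLeaf {y : V} (hy : y ≠ u) : f y ≤ moveOffLeaf f u v y := by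
  simp only [moveOffLeaf, if_neg hy]
  split_ifs with hyv
  · exact hyv ▸ le_max_right _ _
  · exact le_rfl

lemma le_moveOffLeaf_self (hvu : v ≠ u) : f u ≤ moveOffLeaf f u v v := by
  simp [moveOffLeaf, hvu]

lemma moveOffLeaf_le {k : ℕ} (hf : ∀ w, f w ≤ k) (w : V) : moveOffLeaf f u v w ≤ k := by
  unfold moveOffLeaf
  split_ifs
  · exact Nat.zero_le k
  · exact max_le (hf u) (hf v)
  · exact hf w

lemma IsDomKBroadcast.moveOffLeaf {G : SimpleGraph V} {k : ℕ} (hf : IsDomKBroadcast G k f)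
    (hleaf : IsLeaf G u) (hsupp : G.Adj u v) : IsDomKBroadcast G k (moveOffLeaf f u v) := by
  refine ⟨moveOffLeaf_le hf.1, fun x => ?_⟩
  obtain ⟨y, hy, hxy, hdist⟩ := hf.2 x
  by_cases hyu : y = u
  · subst hyu
    have hfv := le_moveOffLeaf_self (f := f) hsupp.ne.symm
    exact ⟨v, hy.trans hfv, hxy.trans hsupp.reachable,
      (dist_le_of_dist_leaf_le hleaf hsupp hxy hy hdist).trans hfv⟩
  · have hfy := le_moveOffLeaf (f := f) (v := v) hyu
    exact ⟨y, hy.trans hfy, hxy, hdist.trans hfy⟩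

lemma sum_moveOffLeaf_le [Fintype V] (huv : u ≠ v) :
    ∑ w, moveOffLeaf f u v w ≤ ∑ w, f w := by
  refine Fintype.sum_le_sum_of_eq_off_pair huv (fun w hwu hwv => by simp [moveOffLeaf, hwu, hwv]) ?_
  simp only [moveOffLeaf, if_true, if_neg huv.symm, zero_add]
  exact max_le_add_of_nonneg (Nat.zero_le _) (Nat.zero_le _)

end MoveOffLeaf

theorem move_broadcast_off_leaf_general {V : Type*} [Fintype V] [DecidableEq V]
    (G : SimpleGraph V) (k : ℕ)
    (f : V → ℕ) (hf : IsDomKBroadcast G k f)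
    (u v : V) (hleaf : IsLeaf G u) (hsupp : G.Adj u v) :
    IsDomKBroadcast G k
      (fun w => if w = u then 0 else if w = v then max (f u) (f v) else f w) ∧
    (∑ᶠ w : V, (if w = u then 0 else if w = v then max (f u) (f v) else f w)) ≤
      ∑ᶠ w : V, f w := by
  refine ⟨hf.moveOffLeaf hleaf hsupp, ?_⟩
  rw [finsum_eq_sum_of_fintype, finsum_eq_sum_of_fintype]
  exact sum_moveOffLeaf_le hsupp.ne

theorem move_broadcast_off_leaf {V : Type*} [Fintype V] [DecidableEq V]
    (G : SimpleGraph V) (hG : G.Connected) (k : ℕ) (hk : 1 ≤ k)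
    (f : V → ℕ) (hf : IsDomKBroadcast G k f)
    (u v : V) (hleaf : IsLeaf G u) (hsupp : G.Adj u v) (hfu : 1 ≤ f u) :
    IsDomKBroadcast G k
      (fun w => if w = u then 0 else if w = v then max (f u) (f v) else f w) ∧
    (∑ᶠ w : V, (if w = u then 0 else if w = v then max (f u) (f v) else f w)) ≤
      ∑ᶠ w : V, f w :=
  move_broadcast_off_leaf_general G k f hf u v hleaf hsupp
end
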